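/- arXiv:1504.00665 — 6 statements merged into one kernel-verified Lean document; each statement's English description precedes it below -/
import Mathlib

section
/- Let X be a compact Hausdorff space, K ⊆ X a closed subset, and A ⊆ C(X) a closed linear subspace. If the set of restrictions to K of elements of the closed unit ball of A is dense in the closed unit ball of C(K), then for every f ∈ C(K) with sup norm strictly less than 1 there exists φ ∈ A with ‖φ‖ < 1 and φ|_K = f; that is, the restriction of the open unit ball of A to K is exactly the open unit ball of C(K). -/
open ContinuousMap Metric Filter Finset

set_option linter.unusedSectionVars false

theorem norm_restrict_le' {X : Type*} [TopologicalSpace X] [CompactSpace X]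
    (K : Set X) [CompactSpace K] (φ : C(X, ℂ)) :
    ‖φ.restrict K‖ ≤ ‖φ‖ :=
  (ContinuousMap.norm_le _ (norm_nonneg φ)).2 fun x => φ.norm_coe_le_norm x

/-- Restriction as a continuous linear map. -/
noncomputable def restrictCLM' {X : Type*} [TopologicalSpace X] [CompactSpace X]
    (K : Set X) [CompactSpace K] : C(X, ℂ) →L[ℂ] C(K, ℂ) :=
  LinearMap.mkContinuous
    { toFun := fun φ => φ.restrict K
      map_add' := fun φ ψ => by ext x; simp
      map_smul' := fun c φ => by ext x; simp }
    1
    (fun φ => by simpa using norm_restrict_le' K φ)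



/-- Bishop's open-ball density lemma: if restrictions of the closed unit ball of a
closed subspace `A ⊆ C(X)` are dense in the closed unit ball of `C(K)`, then every
`f ∈ C(K)` of norm `< 1` is the restriction of some `φ ∈ A` with `‖φ‖ < 1`. -/
theorem stmt0 {X : Type*} [TopologicalSpace X] [CompactSpace X] [T2Space X]
    (K : Set X) (hK : IsClosed K) [CompactSpace K]
    (A : Submodule ℂ C(X, ℂ)) (hA : IsClosed (A : Set C(X, ℂ)))
    (hdense : Metric.closedBall (0 : C(K, ℂ)) 1 ⊆
      closure ((fun φ : C(X, ℂ) => φ.restrict K) ''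
        ((A : Set C(X, ℂ)) ∩ Metric.closedBall 0 1)))
    (f : C(K, ℂ)) (hf : ‖f‖ < 1) :
    ∃ φ ∈ A, ‖φ‖ < 1 ∧ φ.restrict K = f := by
  -- Key approximation lemma
  have key : ∀ g : C(K, ℂ), ∀ ε : ℝ, ∃ φ : C(X, ℂ),
      φ ∈ A ∧ ‖φ‖ ≤ ‖g‖ ∧ (0 < ε → ‖g - φ.restrict K‖ < ε) := by
    intro g ε
    rcases eq_or_lt_of_le (norm_nonneg g) with h0 | hc
    · refine ⟨0, A.zero_mem, by simp [← h0], fun hε => ?_⟩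
      have hg : g = 0 := norm_eq_zero.mp h0.symm
      have : (0 : C(X, ℂ)).restrict K = 0 := by ext x; simp
      simp [hg, this, hε]
    · by_cases hε : 0 < ε
      swap
      · exact ⟨0, A.zero_mem, by simp, fun h => absurd h hε⟩
      set c : ℝ := ‖g‖ with hcdef
      have hcne : (c : ℂ) ≠ 0 := by
        simpa using ne_of_gt hc
      have hmem : (c : ℂ)⁻¹ • g ∈ Metric.closedBall (0 : C(K, ℂ)) 1 := by
        rw [mem_closedBall_zero_iff, norm_smul, norm_inv]
        simp only [Complex.norm_real]
        rw [Real.norm_of_nonneg hc.le]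
        rw [inv_mul_cancel₀ (ne_of_gt hc)]
      have hcl := hdense hmem
      have hεc : 0 < ε / c := div_pos hε hc
      obtain ⟨y, hy, hdist⟩ := Metric.mem_closure_iff.mp hcl (ε / c) hεc
      obtain ⟨φ', ⟨hφ'A, hφ'b⟩, rfl⟩ := hy
      refine ⟨(c : ℂ) • φ', A.smul_mem _ hφ'A, ?_, fun _ => ?_⟩
      · rw [norm_smul]
        simp only [Complex.norm_real]
        rw [Real.norm_of_nonneg hc.le]
        calc c * ‖φ'‖ ≤ c * 1 := by
              exact mul_le_mul_of_nonneg_left (mem_closedBall_zero_iff.mp hφ'b) hc.le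
          _ = c := mul_one c
      · have hres : ((c : ℂ) • φ').restrict K = (c : ℂ) • φ'.restrict K := by
          ext x; simp
        rw [hres]
        have : g - (c : ℂ) • φ'.restrict K = (c : ℂ) • ((c : ℂ)⁻¹ • g - φ'.restrict K) := by
          rw [smul_sub, smul_inv_smul₀ hcne]
        rw [this, norm_smul]
        simp only [Complex.norm_real]
        rw [Real.norm_of_nonneg hc.le]
        have hlt : ‖(c : ℂ)⁻¹ • g - φ'.restrict K‖ < ε / c := by
          rw [← dist_eq_norm]; exact hdist
        calc c * ‖(c : ℂ)⁻¹ • g - φ'.restrict K‖ < c * (ε / c) :=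
              mul_lt_mul_of_pos_left hlt hc
          _ = ε := by field_simp
  -- choose approximants
  choose Φ hΦA hΦn hΦd using key
  set δ : ℝ := (1 - ‖f‖) / 3 with hδdef
  have hδ : 0 < δ := by
    have : 0 < 1 - ‖f‖ := by linarith
    positivity
  -- recursively defined remainders
  set g : ℕ → C(K, ℂ) := fun n =>
    Nat.rec f (fun k gk => gk - (Φ gk (δ * (1 / 2) ^ k)).restrict K) n with hgdef
  set φs : ℕ → C(X, ℂ) := fun n => Φ (g n) (δ * (1 / 2) ^ n) with hφsdef
  have hg0 : g 0 = f := rfl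
  have hgsucc : ∀ n, g (n + 1) = g n - (φs n).restrict K := fun n => rfl
  have hεpos : ∀ n : ℕ, (0 : ℝ) < δ * (1 / 2) ^ n := fun n => by positivity
  have hgnorm : ∀ n, ‖g (n + 1)‖ ≤ δ * (1 / 2) ^ n := by
    intro n
    rw [hgsucc n]
    exact (hΦd (g n) (δ * (1 / 2) ^ n) (hεpos n)).le
  -- bound sequence
  set b : ℕ → ℝ := fun n => Nat.rec ‖f‖ (fun k _ => δ * (1 / 2) ^ k) n with hbdef
  have hb0 : b 0 = ‖f‖ := rfl
  have hbsucc : ∀ n, b (n + 1) = δ * (1 / 2) ^ n := fun n => rfl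
  have hφb : ∀ n, ‖φs n‖ ≤ b n := by
    intro n
    cases n with
    | zero => exact hΦn (g 0) _
    | succ k => exact (hΦn (g (k + 1)) _).trans (hgnorm k)
  have hgeo : Summable (fun n : ℕ => δ * (1 / 2) ^ n) :=
    (summable_geometric_of_lt_one (by norm_num) (by norm_num)).mul_left δ
  have hbsum : Summable b := by
    rw [← summable_nat_add_iff 1]
    simpa [hbsucc] using hgeo
  have htsum_geo : ∑' n : ℕ, δ * (1 / 2) ^ n = 2 * δ := by
    rw [tsum_mul_left, tsum_geometric_of_lt_one (by norm_num) (by norm_num)]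
    ring
  have htsum_b : ∑' n, b n = ‖f‖ + 2 * δ := by
    rw [Summable.tsum_eq_zero_add hbsum]
    simp only [hb0, hbsucc]
    rw [htsum_geo]
  have hφnsum : Summable (fun n => ‖φs n‖) :=
    Summable.of_nonneg_of_le (fun n => norm_nonneg _) hφb hbsum
  have hsum : Summable φs := hφnsum.of_norm
  set Φt : C(X, ℂ) := ∑' n, φs n with hΦtdef
  have hhs : HasSum φs Φt := hsum.hasSum
  -- membership
  have hΦtA : Φt ∈ A := by
    refine hA.mem_of_tendsto hhs (Filter.Eventually.of_forall fun s => ?_)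
    exact A.sum_mem fun i _ => hΦA (g i) _
  -- norm bound
  have hΦtnorm : ‖Φt‖ < 1 := by
    have h1 : ‖Φt‖ ≤ ∑' n, ‖φs n‖ := norm_tsum_le_tsum_norm hφnsum
    have h2 : ∑' n, ‖φs n‖ ≤ ∑' n, b n := Summable.tsum_le_tsum hφb hφnsum hbsum
    rw [htsum_b] at h2
    have : ‖f‖ + 2 * δ < 1 := by rw [hδdef]; linarith
    linarith
  -- restriction
  have hhsR : HasSum (fun n => (φs n).restrict K) (Φt.restrict K) := by
    have := (restrictCLM' K).hasSum hhs
    simpa [restrictCLM', LinearMap.mkContinuous] using this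
  have hpart : ∀ n, ∑ i ∈ Finset.range n, (φs i).restrict K = f - g n := by
    intro n
    induction n with
    | zero => simp [hg0]
    | succ k ih =>
      rw [Finset.sum_range_succ, ih, hgsucc k]
      abel
  have hgz : Tendsto g atTop (nhds 0) := by
    rw [← tendsto_add_atTop_iff_nat 1]
    refine squeeze_zero_norm hgnorm ?_
    have : Tendsto (fun n : ℕ => δ * (1 / 2) ^ n) atTop (nhds 0) := by
      simpa using (tendsto_pow_atTop_nhds_zero_of_lt_one (by norm_num : (0:ℝ) ≤ 1/2)
        (by norm_num)).const_mul δ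
    exact this
  have htendf : Tendsto (fun n => ∑ i ∈ Finset.range n, (φs i).restrict K) atTop (nhds f) := by
    simp only [hpart]
    have := (tendsto_const_nhds (x := f) (f := atTop)).sub hgz
    simpa using this
  have heq : Φt.restrict K = f :=
    tendsto_nhds_unique hhsR.tendsto_sum_nat htendf
  exact ⟨Φt, hΦtA, hΦtnorm, heq⟩
end

section
/- Let H be a complex Hilbert space, T a bounded operator on H, P and Q orthogonal projections on H, and 0 ≤ r. Assume T maps the range of P into the range of Q, T maps the kernel of P into the kernel of Q, ‖T x‖ ≤ ‖x‖ for x in the range of P, and ‖T x‖ ≤ r‖x‖ for x in the kernel of P. Then for all x, y ∈ H: |⟨Tx, y⟩| ≤ (‖Px‖² + r‖(I−P)x‖²)^{1/2} · (‖Qy‖² + r‖(I−Q)y‖²)^{1/2}. -/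
/-!
Write `x = P x + (x - P x)` and `y = Q y + (y - Q y)`. Since `T` maps the first decomposition
into the second and `Q` is an orthogonal projection, the cross terms vanish:
`⟪T x, y⟫ = ⟪T (P x), Q y⟫ + ⟪T (x - P x), y - Q y⟫`. Cauchy–Schwarz and the two norm bounds
give `‖P x‖ ‖Q y‖ + r ‖x - P x‖ ‖y - Q y‖`, and Cauchy–Schwarz in `ℝ²` for the weights `(1, r)`
finishes.
-/

open scoped InnerProductSpace

theorem mul_add_mul_le_sqrt_mul_sqrt {r : ℝ} (hr : 0 ≤ r) (a b c d : ℝ) :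
    a * c + r * b * d ≤ √(a ^ 2 + r * b ^ 2) * √(c ^ 2 + r * d ^ 2) := by
  have hsq : (a * c + r * b * d) ^ 2 ≤ (a ^ 2 + r * b ^ 2) * (c ^ 2 + r * d ^ 2) := by
    nlinarith [mul_nonneg hr (sq_nonneg (a * d - b * c))]
  calc a * c + r * b * d ≤ |a * c + r * b * d| := le_abs_self _
    _ ≤ √((a ^ 2 + r * b ^ 2) * (c ^ 2 + r * d ^ 2)) := Real.abs_le_sqrt hsq
    _ = √(a ^ 2 + r * b ^ 2) * √(c ^ 2 + r * d ^ 2) := Real.sqrt_mul (by positivity) _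

theorem LinearMap.IsIdempotentElem.sub_apply_mem_ker {R M : Type*} [Ring R] [AddCommGroup M]
    [Module R M] {p : M →ₗ[R] M} (hp : IsIdempotentElem p) (x : M) :
    x - p x ∈ LinearMap.ker p := by
  rw [LinearMap.mem_ker, map_sub, ← Module.End.mul_apply, hp.eq, sub_self]

theorem LinearMap.IsSymmetricProjection.inner_add_eq {𝕜 E : Type*} [RCLike 𝕜]
    [SeminormedAddCommGroup E] [InnerProductSpace 𝕜 E] {Q : E →ₗ[𝕜] E}
    (hQ : Q.IsSymmetricProjection) {u w : E} (hu : u ∈ LinearMap.range Q)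
    (hw : w ∈ LinearMap.ker Q) (y : E) :
    ⟪u + w, y⟫_𝕜 = ⟪u, Q y⟫_𝕜 + ⟪w, y - Q y⟫_𝕜 := by
  obtain ⟨v, rfl⟩ := hu
  have hu_perp : ⟪Q v, y - Q y⟫_𝕜 = 0 := by
    rw [hQ.isSymmetric,
      LinearMap.mem_ker.mp (IsIdempotentElem.sub_apply_mem_ker hQ.isIdempotentElem y),
      inner_zero_right]
  have hw_perp : ⟪w, Q y⟫_𝕜 = 0 := by
    rw [← hQ.isSymmetric, LinearMap.mem_ker.mp hw, inner_zero_left]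
  calc ⟪Q v + w, y⟫_𝕜 = ⟪Q v, Q y + (y - Q y)⟫_𝕜 + ⟪w, Q y + (y - Q y)⟫_𝕜 := by
        rw [add_sub_cancel, inner_add_left]
    _ = ⟪Q v, Q y⟫_𝕜 + ⟪w, y - Q y⟫_𝕜 := by
        rw [inner_add_right, inner_add_right, hu_perp, hw_perp, add_zero, zero_add]

theorem stmt5_general {H : Type*} [NormedAddCommGroup H] [InnerProductSpace ℂ H] [CompleteSpace H]
    (T P Q : H →L[ℂ] H) (r : ℝ) (hr : 0 ≤ r)
    (hP1 : IsIdempotentElem P)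
    (hQ1 : IsIdempotentElem Q) (hQ2 : ContinuousLinearMap.adjoint Q = Q)
    (hranTP : ∀ x ∈ LinearMap.range (P : H →ₗ[ℂ] H), T x ∈ LinearMap.range (Q : H →ₗ[ℂ] H))
    (hkerTP : ∀ x ∈ LinearMap.ker (P : H →ₗ[ℂ] H), T x ∈ LinearMap.ker (Q : H →ₗ[ℂ] H))
    (hcontr : ∀ x ∈ LinearMap.range (P : H →ₗ[ℂ] H), ‖T x‖ ≤ ‖x‖)
    (hsmall : ∀ x ∈ LinearMap.ker (P : H →ₗ[ℂ] H), ‖T x‖ ≤ r * ‖x‖) :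
    ∀ x y : H, ‖(inner ℂ (T x) y : ℂ)‖ ≤
      Real.sqrt (‖P x‖ ^ 2 + r * ‖x - P x‖ ^ 2) *
      Real.sqrt (‖Q y‖ ^ 2 + r * ‖y - Q y‖ ^ 2) := by
  intro x y
  have hQ : (Q : H →ₗ[ℂ] H).IsSymmetricProjection :=
    ⟨ContinuousLinearMap.isIdempotentElem_toLinearMap_iff.mpr hQ1,
      ContinuousLinearMap.isSelfAdjoint_iff_isSymmetric.mp hQ2⟩
  have hPx : P x ∈ LinearMap.range (P : H →ₗ[ℂ] H) := LinearMap.mem_range_self _ x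
  have hx : x - P x ∈ LinearMap.ker (P : H →ₗ[ℂ] H) :=
    LinearMap.IsIdempotentElem.sub_apply_mem_ker
      (ContinuousLinearMap.isIdempotentElem_toLinearMap_iff.mpr hP1) x
  have hsplit := hQ.inner_add_eq (hranTP _ hPx) (hkerTP _ hx) y
  rw [← map_add, add_sub_cancel] at hsplit
  calc ‖⟪T x, y⟫_ℂ‖ = ‖⟪T (P x), Q y⟫_ℂ + ⟪T (x - P x), y - Q y⟫_ℂ‖ :=
        congrArg norm hsplit
    _ ≤ ‖P x‖ * ‖Q y‖ + r * ‖x - P x‖ * ‖y - Q y‖ := by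
        refine norm_add_le_of_le ((norm_inner_le_norm _ _).trans ?_)
          ((norm_inner_le_norm _ _).trans ?_)
        · gcongr; exact hcontr _ hPx
        · gcongr; exact hsmall _ hx
    _ ≤ _ := mul_add_mul_le_sqrt_mul_sqrt hr _ _ _ _

/-- A two-block Cauchy–Schwarz estimate: if `T` maps `ran P` into `ran Q` contractively
and `ker P` into `ker Q` with norm at most `r`, then
`|⟨Tx, y⟩| ≤ (‖Px‖² + r‖(I−P)x‖²)^{1/2} (‖Qy‖² + r‖(I−Q)y‖²)^{1/2}`. -/
theorem stmt5 {H : Type*} [NormedAddCommGroup H] [InnerProductSpace ℂ H] [CompleteSpace H]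
    (T P Q : H →L[ℂ] H) (r : ℝ) (hr : 0 ≤ r)
    (hP1 : IsIdempotentElem P) (hP2 : ContinuousLinearMap.adjoint P = P)
    (hQ1 : IsIdempotentElem Q) (hQ2 : ContinuousLinearMap.adjoint Q = Q)
    (hranTP : ∀ x ∈ LinearMap.range (P : H →ₗ[ℂ] H), T x ∈ LinearMap.range (Q : H →ₗ[ℂ] H))
    (hkerTP : ∀ x ∈ LinearMap.ker (P : H →ₗ[ℂ] H), T x ∈ LinearMap.ker (Q : H →ₗ[ℂ] H))
    (hcontr : ∀ x ∈ LinearMap.range (P : H →ₗ[ℂ] H), ‖T x‖ ≤ ‖x‖)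
    (hsmall : ∀ x ∈ LinearMap.ker (P : H →ₗ[ℂ] H), ‖T x‖ ≤ r * ‖x‖) :
    ∀ x y : H, ‖(inner ℂ (T x) y : ℂ)‖ ≤
      Real.sqrt (‖P x‖ ^ 2 + r * ‖x - P x‖ ^ 2) *
      Real.sqrt (‖Q y‖ ^ 2 + r * ‖y - Q y‖ ^ 2) :=
  stmt5_general T P Q r hr hP1 hQ1 hQ2 hranTP hkerTP hcontr hsmall
end

section
/- Let X be a compact convex subset of a locally convex topological vector space, let t: X → ℝ be a continuous, strictly positive, concave function, and let B_t = {b/t : b is the restriction to X of a continuous affine complex-valued function}. If ξ ∈ X is not an extreme point of X, then ξ is not in the Choquet boundary of B_t: there exists a positive regular Borel measure μ on X with total mass at most 1, μ ≠ δ_ξ, such that ∫_X g dμ = g(ξ) for all g ∈ B_t. In fact, if ξ = (ξ₁+ξ₂)/2 with ξ₁ ≠ ξ ≠ ξ₂, the measure μ = (t(ξ₁)/(2t(ξ)))δ_{ξ₁} + (t(ξ₂)/(2t(ξ)))δ_{ξ₂} works. -/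
/-!
Write `ξ = (ξ₁ + ξ₂)/2` and `cᵢ = t ξᵢ / (2 t ξ)`. For an affine `f`, the measure
`c₁ δ_{ξ₁} + c₂ δ_{ξ₂}` integrates `f / t` to `(f ξ₁ + f ξ₂) / (2 t ξ) = f ξ / t ξ`,
so it represents `ξ` on `B_t`; concavity of `t` gives `c₁ + c₂ ≤ 1`, and it gives no
mass to `ξ`.
-/

open MeasureTheory
open scoped ENNReal

namespace MeasureTheory.Measure

variable {α : Type*} [MeasurableSpace α]

instance InnerRegular.dirac [TopologicalSpace α] (a : α) : (dirac a).InnerRegular := by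
  refine ⟨fun s hs r hr ↦ ?_⟩
  by_cases ha : a ∈ s
  · exact ⟨{a}, Set.singleton_subset_iff.2 ha, isCompact_singleton, by
      rwa [dirac_apply_of_mem (Set.mem_singleton a), ← dirac_apply_of_mem ha]⟩
  · simp [dirac_apply' a hs, ha] at hr

variable {c d : ℝ≥0∞} (hc : c ≠ ∞) (hd : d ≠ ∞) (a b : α)
include hc hd

theorem isFiniteMeasure_smul_dirac_add_smul_dirac :
    IsFiniteMeasure (c • dirac a + d • dirac b) := by
  constructor
  simp [hc.lt_top, hd.lt_top]

theorem regular_smul_dirac_add_smul_dirac [TopologicalSpace α] [R1Space α] [BorelSpace α] :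
    (c • dirac a + d • dirac b).Regular :=
  have := isFiniteMeasure_smul_dirac_add_smul_dirac hc hd a b
  inferInstance

theorem integral_smul_dirac_add_smul_dirac [MeasurableSingletonClass α] {F : Type*}
    [NormedAddCommGroup F] [NormedSpace ℝ F] [CompleteSpace F] (g : α → F) :
    ∫ x, g x ∂(c • dirac a + d • dirac b) = c.toReal • g a + d.toReal • g b := by
  rw [integral_add_measure
      ((integrable_dirac enorm_lt_top).smul_measure hc)
      ((integrable_dirac enorm_lt_top).smul_measure hd),
    integral_smul_measure, integral_smul_measure, integral_dirac, integral_dirac]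

end MeasureTheory.Measure

theorem AffineMap.smul_div_add_smul_div_eq_div_midpoint {E : Type*} [AddCommGroup E]
    [Module ℝ E] (f : E →ᵃ[ℝ] ℂ) {t : E → ℝ} {x y : E} (hx : t x ≠ 0) (hy : t y ≠ 0) :
    (t x / (2 * t (midpoint ℝ x y))) • (f x / t x) +
        (t y / (2 * t (midpoint ℝ x y))) • (f y / t y) =
      f (midpoint ℝ x y) / t (midpoint ℝ x y) := by
  rw [f.map_midpoint, midpoint_eq_smul_add ℝ (f x), invOf_eq_inv]
  simp only [Complex.real_smul]
  have hx' : (t x : ℂ) ≠ 0 := by exact_mod_cast hx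
  have hy' : (t y : ℂ) ≠ 0 := by exact_mod_cast hy
  push_cast
  field_simp

theorem stmt9_general {E : Type*} [AddCommGroup E] [Module ℝ E] [TopologicalSpace E]
    [T2Space E]
    [MeasurableSpace E] [BorelSpace E]
    (X : Set E)
    (t : E → ℝ) (htpos : ∀ x ∈ X, 0 < t x)
    (htconc : ∀ x ∈ X, ∀ y ∈ X, (t x + t y) / 2 ≤ t (midpoint ℝ x y))
    (ξ : E) (hξ : ξ ∈ X)
    (ξ₁ : E) (hξ₁ : ξ₁ ∈ X) (ξ₂ : E) (hξ₂ : ξ₂ ∈ X)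
    (hmid : ξ = midpoint ℝ ξ₁ ξ₂) (hne₁ : ξ₁ ≠ ξ) (hne₂ : ξ₂ ≠ ξ) :
    ∃ μ : Measure E, μ.Regular ∧ μ Set.univ ≤ 1 ∧ μ ≠ Measure.dirac ξ ∧
      (∀ f : E →ᴬ[ℝ] ℂ, ∫ x, f x / (t x : ℂ) ∂μ = f ξ / (t ξ : ℂ)) ∧
      μ = ENNReal.ofReal (t ξ₁ / (2 * t ξ)) • Measure.dirac ξ₁ +
            ENNReal.ofReal (t ξ₂ / (2 * t ξ)) • Measure.dirac ξ₂ := by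
  have ht₁ := htpos ξ₁ hξ₁
  have ht₂ := htpos ξ₂ hξ₂
  have htξ := htpos ξ hξ
  have hmass : t ξ₁ / (2 * t ξ) + t ξ₂ / (2 * t ξ) ≤ 1 := by
    rw [← add_div, div_le_one (by positivity)]
    linarith [hmid ▸ htconc ξ₁ hξ₁ ξ₂ hξ₂]
  refine ⟨_, Measure.regular_smul_dirac_add_smul_dirac ENNReal.ofReal_ne_top
    ENNReal.ofReal_ne_top _ _, ?_, fun h ↦ ?_, fun f ↦ ?_, rfl⟩
  · simp only [Measure.add_apply, Measure.smul_apply, smul_eq_mul, measure_univ, mul_one]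
    rw [← ENNReal.ofReal_add (by positivity) (by positivity)]
    exact ENNReal.ofReal_le_one.2 hmass
  · have := congrArg (· {ξ}) h
    simp [hne₁, hne₂] at this
  · rw [Measure.integral_smul_dirac_add_smul_dirac ENNReal.ofReal_ne_top ENNReal.ofReal_ne_top,
      ENNReal.toReal_ofReal (by positivity), ENNReal.toReal_ofReal (by positivity), hmid]
    exact (f : E →ᵃ[ℝ] ℂ).smul_div_add_smul_div_eq_div_midpoint ht₁.ne' ht₂.ne'

/-- If `ξ` is not an extreme point of the compact convex set `X`, then `ξ` is not in the
Choquet boundary of `B_t = {f/t : f affine continuous}`: the measure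
`(t ξ₁/(2 t ξ)) δ_{ξ₁} + (t ξ₂/(2 t ξ)) δ_{ξ₂}` represents `ξ`, has mass at most `1`,
and differs from `δ_ξ`. -/
theorem stmt9 {E : Type*} [AddCommGroup E] [Module ℝ E] [TopologicalSpace E]
    [IsTopologicalAddGroup E] [ContinuousSMul ℝ E] [LocallyConvexSpace ℝ E] [T2Space E]
    [MeasurableSpace E] [BorelSpace E]
    (X : Set E) (hXc : IsCompact X) (hXconv : Convex ℝ X)
    (t : E → ℝ) (htc : ContinuousOn t X) (htpos : ∀ x ∈ X, 0 < t x)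
    (htconc : ∀ x ∈ X, ∀ y ∈ X, (t x + t y) / 2 ≤ t (midpoint ℝ x y))
    (ξ : E) (hξ : ξ ∈ X)
    (ξ₁ : E) (hξ₁ : ξ₁ ∈ X) (ξ₂ : E) (hξ₂ : ξ₂ ∈ X)
    (hmid : ξ = midpoint ℝ ξ₁ ξ₂) (hne₁ : ξ₁ ≠ ξ) (hne₂ : ξ₂ ≠ ξ) :
    ∃ μ : Measure E, μ.Regular ∧ μ Set.univ ≤ 1 ∧ μ ≠ Measure.dirac ξ ∧
      (∀ f : E →ᴬ[ℝ] ℂ, ∫ x, f x / (t x : ℂ) ∂μ = f ξ / (t ξ : ℂ)) ∧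
      μ = ENNReal.ofReal (t ξ₁ / (2 * t ξ)) • Measure.dirac ξ₁ +
            ENNReal.ofReal (t ξ₂ / (2 * t ξ)) • Measure.dirac ξ₂ :=
  stmt9_general X t htpos htconc ξ hξ ξ₁ hξ₁ ξ₂ hξ₂ hmid hne₁ hne₂
end

section
/- Let X be a compact Hausdorff space, t ∈ C(X) a strictly positive real function, and V ⊆ C(X) a norm-closed linear subspace. Suppose there exists a point x₀ ∈ X with v(x₀) = 0 for all v ∈ V. Then the set B = {(c + v)/t : c ∈ ℂ, v ∈ V} is a norm-closed linear subspace of C(X). -/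
/-- If every `v ∈ V` vanishes at some fixed point `x₀`, then
`B = {(c + v)/t : c ∈ ℂ, v ∈ V}` is a norm-closed linear subspace of `C(X)`. -/
theorem stmt11 {X : Type*} [TopologicalSpace X] [CompactSpace X] [T2Space X]
    (t : C(X, ℝ)) (ht : ∀ x, 0 < t x)
    (V : Submodule ℂ C(X, ℂ)) (hV : IsClosed (V : Set C(X, ℂ)))
    (x₀ : X) (hx₀ : ∀ v ∈ V, v x₀ = 0) :
    (∃ B : Submodule ℂ C(X, ℂ), (B : Set C(X, ℂ)) =
      {g : C(X, ℂ) | ∃ c : ℂ, ∃ v ∈ V, ∀ x, g x = (c + v x) / (t x : ℂ)}) ∧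
    IsClosed {g : C(X, ℂ) | ∃ c : ℂ, ∃ v ∈ V, ∀ x, g x = (c + v x) / (t x : ℂ)} := by
  have htne : ∀ x, (t x : ℂ) ≠ 0 := fun x => by
    exact_mod_cast (ht x).ne'
  set tc : C(X, ℂ) := ⟨fun x => (t x : ℂ), Complex.continuous_ofReal.comp t.continuous⟩
    with htc
  set M : C(X, ℂ) →ₗ[ℂ] C(X, ℂ) := LinearMap.mulLeft ℂ tc with hM
  have hMcont : Continuous M := by
    have : Continuous fun g : C(X, ℂ) => tc * g := continuous_const.mul continuous_id
    exact this
  set W : Submodule ℂ C(X, ℂ) := (ℂ ∙ (1 : C(X, ℂ))) ⊔ V with hW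
  -- W is closed
  have hWset : (W : Set C(X, ℂ)) = (fun f : C(X, ℂ) => f - (f x₀) • 1) ⁻¹' V := by
    ext f
    simp only [Set.mem_preimage, SetLike.mem_coe, hW, Submodule.mem_sup,
      Submodule.mem_span_singleton]
    constructor
    · rintro ⟨y, ⟨c, rfl⟩, v, hv, rfl⟩
      have : (c • (1 : C(X, ℂ)) + v) x₀ = c := by
        simp [hx₀ v hv]
      rw [this]
      have : c • (1 : C(X, ℂ)) + v - c • 1 = v := by ring
      rw [this]; exact hv
    · intro h
      exact ⟨(f x₀) • 1, ⟨f x₀, rfl⟩, f - (f x₀) • 1, h, by ring⟩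
  have hWclosed : IsClosed (W : Set C(X, ℂ)) := by
    rw [hWset]
    exact hV.preimage (continuous_id.sub
      ((continuous_eval_const x₀).smul continuous_const))
  -- the key set equality
  have key : ((W.comap M : Submodule ℂ C(X, ℂ)) : Set C(X, ℂ)) =
      {g : C(X, ℂ) | ∃ c : ℂ, ∃ v ∈ V, ∀ x, g x = (c + v x) / (t x : ℂ)} := by
    ext g
    simp only [SetLike.mem_coe, Submodule.mem_comap, hM, LinearMap.mulLeft_apply, hW,
      Submodule.mem_sup, Submodule.mem_span_singleton, Set.mem_setOf_eq]
    constructor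
    · rintro ⟨y, ⟨c, rfl⟩, v, hv, hsum⟩
      refine ⟨c, v, hv, fun x => ?_⟩
      have := ContinuousMap.congr_fun hsum x
      simp only [ContinuousMap.add_apply, ContinuousMap.smul_apply, ContinuousMap.one_apply,
        ContinuousMap.mul_apply, htc, ContinuousMap.coe_mk, smul_eq_mul, mul_one] at this
      rw [eq_div_iff (htne x), mul_comm, ← this]
    · rintro ⟨c, v, hv, h⟩
      refine ⟨c • 1, ⟨c, rfl⟩, v, hv, ?_⟩
      ext x
      have := h x
      rw [eq_div_iff (htne x)] at this
      simp only [ContinuousMap.add_apply, ContinuousMap.smul_apply, ContinuousMap.one_apply,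
        ContinuousMap.mul_apply, htc, ContinuousMap.coe_mk, smul_eq_mul, mul_one]
      rw [mul_comm, ← this]
  exact ⟨⟨W.comap M, key⟩, key ▸ hWclosed.preimage hMcont⟩
end

section
/- Let X be a compact Hausdorff space and f ∈ C(X) with ‖f‖_∞ = 1, and suppose K := {x ∈ X : f(x) = 1} = {x ∈ X : |f(x)| = 1}. Define g = Σ_{n=1}^∞ 2^{-n} f^n (the series converging uniformly on X). Then g ∈ C(X), ‖g‖_∞ = 1, g(x) = 1 for all x ∈ K, and |g(x)| < 1 for all x ∈ X \ K. -/
/-! Summing the geometric series gives `g = f / (2 - f)` in closed form. Since `‖f‖ ≤ 1`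
forces `‖2 - f x‖ ≥ 1`, we get `‖g x‖ ≤ ‖f x‖`, so `g` inherits the bound `1`, and the strict
bound off the peak set, from `f`; on the peak set `g = 1 / (2 - 1) = 1`. -/

namespace Complex

lemma hasSum_half_pow_mul_pow {z : ℂ} (hz : ‖z‖ < 2) :
    HasSum (fun n : ℕ => (1 / 2 : ℂ) ^ (n + 1) * z ^ (n + 1)) (z / (2 - z)) := by
  have hr : ‖z / 2‖ < 1 := by rw [norm_div, norm_ofNat]; linarith
  have hne : (2 : ℂ) - z ≠ 0 := fun h => by
    rw [← sub_eq_zero.mp h, norm_ofNat] at hz; exact lt_irrefl _ hz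
  have hsum := (hasSum_geometric_of_norm_lt_one hr).mul_left (z / 2)
  have hterm : (fun n : ℕ => z / 2 * (z / 2) ^ n) =
      fun n : ℕ => (1 / 2 : ℂ) ^ (n + 1) * z ^ (n + 1) := by
    funext n; ring
  have hlim : z / 2 * (1 - z / 2)⁻¹ = z / (2 - z) := by
    field_simp
  rwa [hterm, hlim] at hsum

lemma one_le_norm_two_sub {z : ℂ} (hz : ‖z‖ ≤ 1) : 1 ≤ ‖2 - z‖ := by
  have := norm_sub_norm_le (2 : ℂ) z
  rw [norm_ofNat] at this
  linarith

lemma norm_div_two_sub_le {z : ℂ} (hz : ‖z‖ ≤ 1) : ‖z / (2 - z)‖ ≤ ‖z‖ := by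
  rw [norm_div]
  exact div_le_self (norm_nonneg z) (one_le_norm_two_sub hz)

end Complex

theorem stmt12_general {X : Type*} [TopologicalSpace X] [CompactSpace X]
    (f : C(X, ℂ)) (hf : ‖f‖ = 1)
    (K : Set X) (hK : K = {x | f x = 1}) (hK' : {x | ‖f x‖ = 1} = K)
    (hKne : K.Nonempty) :
    ∃ g : C(X, ℂ),
      (∀ x : X, HasSum (fun n : ℕ => (1 / 2 : ℂ) ^ (n + 1) * (f x) ^ (n + 1)) (g x)) ∧
      ‖g‖ = 1 ∧ (∀ x ∈ K, g x = 1) ∧ ∀ x ∉ K, ‖g x‖ < 1 := by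
  have hb (x : X) : ‖f x‖ ≤ 1 := hf ▸ f.norm_coe_le_norm x
  let g : C(X, ℂ) := ⟨fun x => f x / (2 - f x), f.continuous.div
    (continuous_const.sub f.continuous) fun x => norm_pos_iff.mp
      (one_pos.trans_le (Complex.one_le_norm_two_sub (hb x)))⟩
  have hg_peak : ∀ x ∈ K, g x = 1 := by
    intro x hx
    rw [hK] at hx
    change f x / (2 - f x) = 1
    rw [hx.out]
    norm_num
  refine ⟨g, fun x => Complex.hasSum_half_pow_mul_pow ((hb x).trans_lt one_lt_two), ?_,
    hg_peak, ?_⟩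
  · obtain ⟨x₀, hx₀⟩ := hKne
    refine le_antisymm ((ContinuousMap.norm_le _ zero_le_one).2 fun x =>
      (Complex.norm_div_two_sub_le (hb x)).trans (hb x)) ?_
    simpa [hg_peak x₀ hx₀] using g.norm_coe_le_norm x₀
  · intro x hx
    have hlt : ‖f x‖ < 1 := (hb x).lt_of_ne fun h => hx (hK' ▸ h)
    exact (Complex.norm_div_two_sub_le (hb x)).trans_lt hlt

/-- If `‖f‖∞ = 1` and its peak set `K = {f = 1} = {|f| = 1}` is nonempty, then
`g = Σ_{n≥1} 2^{-n} f^n` is continuous, has norm `1`, equals `1` on `K`, and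
has modulus `< 1` off `K`. -/
theorem stmt12 {X : Type*} [TopologicalSpace X] [CompactSpace X] [T2Space X]
    (f : C(X, ℂ)) (hf : ‖f‖ = 1)
    (K : Set X) (hK : K = {x | f x = 1}) (hK' : {x | ‖f x‖ = 1} = K)
    (hKne : K.Nonempty) :
    ∃ g : C(X, ℂ),
      (∀ x : X, HasSum (fun n : ℕ => (1 / 2 : ℂ) ^ (n + 1) * (f x) ^ (n + 1)) (g x)) ∧
      ‖g‖ = 1 ∧ (∀ x ∈ K, g x = 1) ∧ ∀ x ∉ K, ‖g x‖ < 1 :=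
  stmt12_general f hf K hK hK' hKne
end

section
/- Let V be a separable complex Banach space and let C be a weak-* compact convex subset of the dual space V*. Then every extreme point of C belongs to the weak-* closure of the set of weak-* exposed points of C. -/
/-!
By Choquet's lemma the open slices `{Ψ ∈ C | a < Re Ψ v}` form a neighbourhood basis of `C` at an
extreme point, so it suffices to find a weak-* exposed point in every slice.

Inside a slice, perturb `v` successively in the directions `w` of a dense sequence. The support
function `t ↦ sup_{Ψ ∈ C} Re Ψ (v + t • w)` is Lipschitz, so at some small `t > 0` its increments
on both sides nearly agree; then all functionals in a thin enough slice at `v + t • w` have nearly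
the same value `Re Ψ w`. Because `V` is complete, the perturbations converge to some `g`, and every
maximizer of `Re Ψ g` on `C` lies in all the slices. Two such maximizers agree on a dense set, so
the maximizer is unique, i.e. it is exposed by `g`.
-/

open Set Topology Filter

section ConvexCompact

variable {E : Type*} [AddCommGroup E] [Module ℝ E]

theorem mem_of_mem_extremePoints_of_mem_convexHull {C S : Set E} {x : E}
    (hx : x ∈ extremePoints ℝ C) (hSC : convexHull ℝ S ⊆ C) (hxS : x ∈ convexHull ℝ S) : x ∈ S :=
  extremePoints_convexHull_subset (inter_extremePoints_subset_extremePoints_of_subset hSC ⟨hxS, hx⟩)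

variable [TopologicalSpace E]

theorem IsCompact.convexJoin [ContinuousAdd E] [ContinuousSMul ℝ E] {s t : Set E}
    (hs : IsCompact s) (ht : IsCompact t) : IsCompact (_root_.convexJoin ℝ s t) := by
  have h : _root_.convexJoin ℝ s t =
      (fun p : ℝ × E × E => (1 - p.1) • p.2.1 + p.1 • p.2.2) '' (Icc 0 1 ×ˢ s ×ˢ t) := by
    ext z
    simp only [mem_convexJoin, segment_eq_image, mem_image, mem_prod, Prod.exists]
    aesop
  rw [h]
  exact (isCompact_Icc.prod (hs.prod ht)).image (by fun_prop)

theorem Set.Finite.isCompact_convexHull_biUnion [ContinuousAdd E] [ContinuousSMul ℝ E]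
    {ι : Type*} {b : Set ι} (hb : b.Finite) {A : ι → Set E}
    (hA : ∀ i ∈ b, IsCompact (convexHull ℝ (A i))) :
    IsCompact (convexHull ℝ (⋃ i ∈ b, A i)) := by
  induction b, hb using Set.Finite.induction_on with
  | empty => simp
  | @insert i b _ _ ih =>
    rw [biUnion_insert]
    have hb : ∀ j ∈ b, IsCompact (convexHull ℝ (A j)) := fun j hj => hA j (mem_insert_of_mem _ hj)
    rcases (A i).eq_empty_or_nonempty with hi | hi
    · simpa [hi] using ih hb
    rcases (⋃ j ∈ b, A j).eq_empty_or_nonempty with hU | hU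
    · simpa [hU] using hA i (mem_insert _ _)
    rw [convexHull_union hi hU]
    exact (hA i (mem_insert _ _)).convexJoin (ih hb)

theorem exists_convex_isCompact_sdiff_subset_of_mem_extremePoints [IsTopologicalAddGroup E]
    [ContinuousSMul ℝ E] [LocallyConvexSpace ℝ E] [T1Space E] {C U : Set E} (hC : IsCompact C)
    (hconv : Convex ℝ C) {x : E} (hx : x ∈ extremePoints ℝ C) (hU : U ∈ 𝓝 x) :
    ∃ K : Set E, Convex ℝ K ∧ IsCompact K ∧ C \ U ⊆ K ∧ x ∉ K := by
  have hsep : ∀ y, ∃ l : StrongDual ℝ E, y ≠ x → l y < l x := fun y => by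
    by_cases hy : y = x
    · exact ⟨0, fun h => (h hy).elim⟩
    · obtain ⟨l, hl⟩ := geometric_hahn_banach_point_point hy
      exact ⟨l, fun _ => hl⟩
  choose l hl using hsep
  set c : E → ℝ := fun y => (l y y + l y x) / 2
  have hne : ∀ y ∈ C \ interior U, y ≠ x := fun y hy h =>
    hy.2 (h ▸ mem_interior_iff_mem_nhds.2 hU)
  obtain ⟨t, htCU, hcover⟩ := (hC.diff isOpen_interior).elim_nhds_subcover
    (fun y => {z | l y z < c y}) fun y hy =>
      (isOpen_lt (l y).continuous continuous_const).mem_nhds (by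
        have := hl y (hne y hy)
        simp only [mem_ofPred_eq, c]
        linarith)
  set K := convexHull ℝ (⋃ y ∈ (t : Set E), C ∩ {z | l y z ≤ c y})
  have hKC : K ⊆ C := convexHull_min (iUnion₂_subset fun _ _ => inter_subset_left) hconv
  refine ⟨K, convex_convexHull ℝ _, ?_, fun y hy => ?_, fun hxK => ?_⟩
  · refine t.finite_toSet.isCompact_convexHull_biUnion fun y _ => ?_
    have hconv_y : Convex ℝ (C ∩ {z | l y z ≤ c y}) :=
      hconv.inter (convex_halfSpace_le (l y).isLinear _)
    rw [hconv_y.convexHull_eq]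
    exact hC.inter_right (isClosed_le (l y).continuous continuous_const)
  · obtain ⟨z, hz, hyz⟩ := mem_iUnion₂.1 (hcover ⟨hy.1, fun h => hy.2 (interior_subset h)⟩)
    exact subset_convexHull ℝ _ (mem_biUnion hz ⟨hy.1, le_of_lt (show l z y < c z from hyz)⟩)
  · obtain ⟨y, hyt, -, hxy⟩ := mem_iUnion₂.1 (mem_of_mem_extremePoints_of_mem_convexHull hx hKC hxK)
    have := hl y (hne y (htCU y hyt))
    simp only [mem_ofPred_eq, c] at hxy
    linarith

/-- **Choquet's lemma**. -/
theorem exists_slice_subset_of_mem_extremePoints [IsTopologicalAddGroup E] [ContinuousSMul ℝ E]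
    [LocallyConvexSpace ℝ E] [T1Space E] {C U : Set E} (hC : IsCompact C) (hconv : Convex ℝ C)
    {x : E} (hx : x ∈ extremePoints ℝ C) (hU : U ∈ 𝓝 x) :
    ∃ (l : StrongDual ℝ E) (a : ℝ), a < l x ∧ ∀ y ∈ C, a < l y → y ∈ U := by
  obtain ⟨K, hKconv, hK, hCUK, hxK⟩ :=
    exists_convex_isCompact_sdiff_subset_of_mem_extremePoints hC hconv hx hU
  obtain ⟨f, u, v, hfK, huv, hfx⟩ := geometric_hahn_banach_compact_closed hKconv hK
    (convex_singleton x) isClosed_singleton (disjoint_singleton_right.2 hxK)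
  refine ⟨f, u, huv.trans (hfx x rfl), fun y hyC hy => ?_⟩
  by_contra hyU
  exact (hfK y (hCUK ⟨hyC, hyU⟩)).not_gt hy

end ConvexCompact

theorem exists_succ_sub_lt_of_abs_le (D : ℕ → ℝ) {M c : ℝ} {N : ℕ} (hD : ∀ i, |D i| ≤ M)
    (hN : 2 * M < N * c) : ∃ i < N, D (i + 1) - D i < c := by
  by_contra! h
  have hsum : N * c ≤ D N - D 0 := by
    rw [← Finset.sum_range_sub D N]
    simpa using Finset.card_nsmul_le_sum (Finset.range N) (fun i => D (i + 1) - D i) c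
      fun i hi => h i (Finset.mem_range.1 hi)
  linarith [(abs_le.1 (hD N)).2, (abs_le.1 (hD 0)).1]

section UpperEnvelope

variable {ι : Type*} {s : Set ι} {a b : ι → ℝ} {φ : ℝ → ℝ}

def IsUpperEnvelope (s : Set ι) (a b : ι → ℝ) (φ : ℝ → ℝ) : Prop :=
  ∀ t, IsGreatest ((fun i => a i + t * b i) '' s) (φ t)

theorem IsUpperEnvelope.le (hφ : IsUpperEnvelope s a b φ) (t : ℝ) {i : ι} (hi : i ∈ s) :
    a i + t * b i ≤ φ t :=
  (hφ t).2 (mem_image_of_mem _ hi)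

theorem IsUpperEnvelope.abs_sub_le {R : ℝ} (hφ : IsUpperEnvelope s a b φ)
    (hR : ∀ i ∈ s, |b i| ≤ R) (t t' : ℝ) : |φ t - φ t'| ≤ R * |t - t'| := by
  have key : ∀ t t', φ t - φ t' ≤ R * |t - t'| := fun t t' => by
    obtain ⟨i, hi, hφi⟩ := (hφ t).1
    calc φ t - φ t' ≤ (t - t') * b i := by linarith [hφ.le t' hi]
      _ ≤ |t - t'| * |b i| := by rw [← abs_mul]; exact le_abs_self _
      _ ≤ R * |t - t'| := by rw [mul_comm]; gcongr; exact hR i hi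
  exact abs_sub_le_iff.2 ⟨key t t', by rw [abs_sub_comm t]; exact key t' t⟩

theorem IsUpperEnvelope.mul_mem_Ioo (hφ : IsUpperEnvelope s a b φ) {t Δ δ : ℝ} {i : ι}
    (hi : i ∈ s) (hnear : φ t - δ < a i + t * b i) :
    Δ * b i ∈ Ioo (φ t - φ (t - Δ) - δ) (φ (t + Δ) - φ t + δ) := by
  constructor <;> linarith [hφ.le (t - Δ) hi, hφ.le (t + Δ) hi]

/-- As `φ` is `R`-Lipschitz, its increments over a grid of step `Δ` in `(0, ε₀]` cannot all grow
by `η * Δ / 2`. Where they do not, the slope of every line that comes close to `φ` is squeezed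
between two increments that differ by less than `η * Δ / 2`. -/
theorem IsUpperEnvelope.exists_slope_oscillation_le {R η ε₀ : ℝ}
    (hφ : IsUpperEnvelope s a b φ) (hR : ∀ i ∈ s, |b i| ≤ R) (hη : 0 < η) (hε₀ : 0 < ε₀) :
    ∃ ε δ : ℝ, 0 < ε ∧ ε ≤ ε₀ ∧ 0 < δ ∧ ∀ i ∈ s, ∀ j ∈ s,
      φ ε - δ < a i + ε * b i → φ ε - δ < a j + ε * b j → |b i - b j| ≤ η := by
  obtain ⟨N, hN⟩ := exists_nat_gt (4 * R / η)
  set Δ := ε₀ / (N + 1)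
  have hΔ : 0 < Δ := by positivity
  set D : ℕ → ℝ := fun k => φ ((k + 1 : ℕ) * Δ) - φ (k * Δ)
  have hD : ∀ k, |D k| ≤ R * Δ := fun k => by
    have h := hφ.abs_sub_le hR ((k + 1 : ℕ) * Δ) (k * Δ)
    rwa [show ((k + 1 : ℕ) : ℝ) * Δ - k * Δ = Δ by push_cast; ring, abs_of_pos hΔ] at h
  obtain ⟨k, hkN, hk⟩ := exists_succ_sub_lt_of_abs_le D hD (c := η * Δ / 2) (N := N + 1) (by
    rw [div_lt_iff₀ hη] at hN; push_cast; nlinarith)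
  refine ⟨(k + 1 : ℕ) * Δ, η * Δ / 4, by positivity, ?_, by positivity, ?_⟩
  · calc ((k + 1 : ℕ) : ℝ) * Δ ≤ (N + 1) * Δ := by gcongr; exact_mod_cast hkN
      _ = ε₀ := by simp only [Δ]; field_simp
  intro i hi j hj hnear_i hnear_j
  have hleft : ((k + 1 : ℕ) : ℝ) * Δ - Δ = k * Δ := by push_cast; ring
  have hright : ((k + 1 : ℕ) : ℝ) * Δ + Δ = (k + 1 + 1 : ℕ) * Δ := by push_cast; ring
  obtain ⟨hi₁, hi₂⟩ := hφ.mul_mem_Ioo (Δ := Δ) hi hnear_i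
  obtain ⟨hj₁, hj₂⟩ := hφ.mul_mem_Ioo (Δ := Δ) hj hnear_j
  rw [hleft] at hi₁ hj₁
  rw [hright] at hi₂ hj₂
  have : |Δ * (b i - b j)| < Δ * η := by
    rw [abs_lt]; constructor <;> simp only [D] at hk <;> linarith
  rw [abs_mul, abs_of_pos hΔ] at this
  exact (lt_of_mul_lt_mul_left this hΔ.le).le

end UpperEnvelope

theorem exists_dist_le_of_dist_succ_le {X : Type*} [PseudoMetricSpace X] [CompleteSpace X]
    {x : ℕ → X} {d : ℕ → ℝ} (hd : ∀ n, d (n + 1) ≤ d n / 2)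
    (hx : ∀ n, dist (x n) (x (n + 1)) ≤ d n) : ∃ y, ∀ n, dist (x n) y ≤ 2 * d n := by
  have hgeom : ∀ n k, d (n + k) ≤ d n / 2 ^ k := fun n k => by
    induction k with
    | zero => simp
    | succ k ih =>
      calc d (n + (k + 1)) ≤ d (n + k) / 2 := hd (n + k)
        _ ≤ d n / 2 ^ k / 2 := by gcongr
        _ = d n / 2 ^ (k + 1) := by ring
  have hshift : ∀ n k, dist (x (n + k)) (x (n + k + 1)) ≤ 2 * d n / 2 / 2 ^ k := fun n k =>
    (hx (n + k)).trans (by simpa using hgeom n k)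
  obtain ⟨y, hy⟩ := cauchySeq_tendsto_of_complete
    (cauchySeq_of_le_geometric_two (C := 2 * d 0) (by simpa using hshift 0))
  refine ⟨y, fun n => dist_le_of_le_geometric_two_of_tendsto₀ (hshift n) ?_⟩
  simpa only [add_comm n] using (tendsto_add_atTop_iff_nat n).2 hy

namespace WeakDual

section TopologicalModule

variable {V : Type*} [AddCommGroup V] [Module ℂ V] [TopologicalSpace V]

instance : IsScalarTower ℝ ℂ (WeakDual ℂ V) := inferInstanceAs (IsScalarTower ℝ ℂ (V →L[ℂ] ℂ))

instance : LocallyConvexSpace ℝ (WeakDual ℂ V) :=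
  WeakBilin.locallyConvexSpace (B := topDualPairing ℂ V)

theorem exists_re_apply_eq (l : StrongDual ℝ (WeakDual ℂ V)) :
    ∃ v : V, ∀ Φ : WeakDual ℂ V, l Φ = (Φ v).re := by
  obtain ⟨v, hv⟩ := LinearMap.dualEmbedding_surjective (topDualPairing ℂ V)
    (StrongDual.extendRCLikeₗ (𝕜 := ℂ) l)
  refine ⟨v, fun Φ => ?_⟩
  have h := StrongDual.re_extendRCLike_apply (𝕜 := ℂ) l Φ
  rw [← StrongDual.extendRCLikeₗ_apply, ← hv] at h
  exact h.symm

theorem ext_re {Φ Ψ : WeakDual ℂ V} (h : ∀ v, (Φ v).re = (Ψ v).re) : Φ = Ψ := by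
  refine DFunLike.ext _ _ fun v => Complex.ext (h v) ?_
  simpa using h (Complex.I • v)

theorem eq_of_re_apply_eq_of_denseRange {ι : Type*} {u : ι → V} (hu : DenseRange u)
    {Φ Ψ : WeakDual ℂ V} (h : ∀ m, (Φ (u m)).re = (Ψ (u m)).re) : Φ = Ψ :=
  ext_re (congrFun (hu.equalizer (Complex.continuous_re.comp (map_continuous Φ))
    (Complex.continuous_re.comp (map_continuous Ψ)) (funext h)))

theorem continuous_re_apply (v : V) : Continuous fun Φ : WeakDual ℂ V => (Φ v).re :=
  Complex.continuous_re.comp (eval_continuous v)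

theorem re_apply_add_smul (Φ : WeakDual ℂ V) (g w : V) (t : ℝ) :
    (Φ (g + (t : ℂ) • w)).re = (Φ g).re + t * (Φ w).re := by
  rw [map_add, map_smul, smul_eq_mul, Complex.add_re, Complex.re_ofReal_mul]

noncomputable def reSupport (C : Set (WeakDual ℂ V)) (g : V) : ℝ :=
  sSup ((fun Φ : WeakDual ℂ V => (Φ g).re) '' C)

def reSlice (C : Set (WeakDual ℂ V)) (g : V) (δ : ℝ) : Set (WeakDual ℂ V) :=
  {Φ ∈ C | reSupport C g - δ < (Φ g).re}

variable {C : Set (WeakDual ℂ V)}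

theorem re_apply_le_reSupport (hC : IsCompact C) {Φ : WeakDual ℂ V} (hΦ : Φ ∈ C) (g : V) :
    (Φ g).re ≤ reSupport C g :=
  le_csSup (hC.image (continuous_re_apply g)).bddAbove (mem_image_of_mem _ hΦ)

theorem exists_re_apply_eq_reSupport (hC : IsCompact C) (hne : C.Nonempty) (g : V) :
    ∃ Φ ∈ C, (Φ g).re = reSupport C g :=
  (hC.image (continuous_re_apply g)).sSup_mem (hne.image _)

theorem reSlice_mono {g : V} {δ δ' : ℝ} (h : δ' ≤ δ) : reSlice C g δ' ⊆ reSlice C g δ :=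
  fun _ hΦ => ⟨hΦ.1, by linarith [hΦ.2]⟩

theorem exists_reSlice_subset_of_mem_extremePoints (hC : IsCompact C) (hconv : Convex ℝ C)
    {x : WeakDual ℂ V} (hx : x ∈ extremePoints ℝ C) {U : Set (WeakDual ℂ V)} (hU : U ∈ 𝓝 x) :
    ∃ (v : V) (δ : ℝ), 0 < δ ∧ reSlice C v δ ⊆ U := by
  -- Fixing `E` before `hconv` is seen makes the instances on `WeakDual ℂ V` come from synthesis;
  -- unifying with the `ℝ`-action in `hconv` would instead pick `Module.complexToReal`.
  have hchoquet :=
    exists_slice_subset_of_mem_extremePoints (E := WeakDual ℂ V) (C := C) (x := x) (U := U)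
  obtain ⟨l, a, hax, hslice⟩ := hchoquet hC hconv hx hU
  obtain ⟨v, hv⟩ := exists_re_apply_eq l
  refine ⟨v, reSupport C v - a, ?_, fun Ψ hΨ => hslice Ψ hΨ.1 ?_⟩
  · linarith [hv x, re_apply_le_reSupport hC hx.1 v]
  · rw [hv]; linarith [hΨ.2]

theorem isUpperEnvelope_reSupport (hC : IsCompact C) (hne : C.Nonempty) (g w : V) :
    IsUpperEnvelope C (fun Φ => (Φ g).re) (fun Φ => (Φ w).re)
      (fun t => reSupport C (g + (t : ℂ) • w)) := fun t => by
  simpa only [reSupport, re_apply_add_smul] using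
    (hC.image (continuous_re_apply (g + (t : ℂ) • w))).isGreatest_sSup (hne.image _)

theorem exists_reSlice_oscillation_le (hC : IsCompact C) (hne : C.Nonempty) (g w : V)
    {η ε₀ : ℝ} (hη : 0 < η) (hε₀ : 0 < ε₀) :
    ∃ ε δ : ℝ, 0 < ε ∧ ε ≤ ε₀ ∧ 0 < δ ∧ ∀ Φ ∈ reSlice C (g + (ε : ℂ) • w) δ,
      ∀ Ψ ∈ reSlice C (g + (ε : ℂ) • w) δ, |(Φ w).re - (Ψ w).re| ≤ η := by
  obtain ⟨R, hR⟩ := (hC.image (continuous_re_apply w)).isBounded.exists_norm_le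
  obtain ⟨ε, δ, hε, hεε₀, hδ, hosc⟩ :=
    (isUpperEnvelope_reSupport hC hne g w).exists_slope_oscillation_le
      (fun Φ hΦ => hR _ (mem_image_of_mem _ hΦ)) hη hε₀
  refine ⟨ε, δ, hε, hεε₀, hδ, fun Φ hΦ Ψ hΨ => hosc Φ hΦ.1 Ψ hΨ.1 ?_ ?_⟩
  · simpa only [re_apply_add_smul] using hΦ.2
  · simpa only [re_apply_add_smul] using hΨ.2

end TopologicalModule

section Normed

variable {V : Type*} [NormedAddCommGroup V] [NormedSpace ℂ V] {C : Set (WeakDual ℂ V)} {R : ℝ}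

theorem exists_norm_apply_le_of_isCompact [CompleteSpace V] (hC : IsCompact C) :
    ∃ R, 0 < R ∧ ∀ Φ ∈ C, ∀ v, ‖Φ v‖ ≤ R * ‖v‖ := by
  have hb := isBounded_iff_isVonNBounded.2 (hC.isVonNBounded (𝕜 := ℂ))
  rw [← isBounded_toWeakDual_preimage_iff_isBounded, isBounded_iff_forall_norm_le] at hb
  obtain ⟨R, hR⟩ := hb
  refine ⟨max R 1, by positivity, fun Φ hΦ v => (toStrongDual Φ).le_opNorm v |>.trans ?_⟩
  gcongr
  exact (hR _ hΦ).trans (le_max_left _ _)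

theorem reSupport_le_add (hC : IsCompact C) (hne : C.Nonempty)
    (hR : ∀ Φ ∈ C, ∀ v, ‖Φ v‖ ≤ R * ‖v‖) (g g' : V) :
    reSupport C g ≤ reSupport C g' + R * ‖g - g'‖ := by
  obtain ⟨Φ, hΦ, hmax⟩ := exists_re_apply_eq_reSupport hC hne g
  have h := (Complex.re_le_norm _).trans (hR Φ hΦ (g - g'))
  rw [map_sub, Complex.sub_re] at h
  linarith [re_apply_le_reSupport hC hΦ g']

theorem reSlice_subset_reSlice (hC : IsCompact C) (hR : ∀ Φ ∈ C, ∀ v, ‖Φ v‖ ≤ R * ‖v‖)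
    {g g' : V} {δ δ' : ℝ} (h : 2 * R * ‖g - g'‖ + δ' ≤ δ) : reSlice C g' δ' ⊆ reSlice C g δ := by
  rintro Φ ⟨hΦ, hnear⟩
  have hsupp := reSupport_le_add hC ⟨Φ, hΦ⟩ hR g g'
  have h' := (Complex.re_le_norm _).trans (hR Φ hΦ (g' - g))
  rw [map_sub, Complex.sub_re, norm_sub_rev] at h'
  exact ⟨hΦ, by linarith⟩

theorem exists_reSlice_step (hC : IsCompact C) (hne : C.Nonempty) (g w : V) {r δ₀ η : ℝ}
    (hr : 0 < r) (hδ₀ : 0 < δ₀) (hη : 0 < η) :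
    ∃ g' δ, ‖g' - g‖ ≤ r ∧ 0 < δ ∧ δ ≤ δ₀ ∧
      ∀ Φ ∈ reSlice C g' δ, ∀ Ψ ∈ reSlice C g' δ, |(Φ w).re - (Ψ w).re| ≤ η := by
  obtain ⟨ε, δ, hε, hεε₀, hδ, hosc⟩ :=
    exists_reSlice_oscillation_le hC hne g w hη (ε₀ := r / (‖w‖ + 1)) (by positivity)
  refine ⟨g + (ε : ℂ) • w, min δ δ₀, ?_, lt_min hδ hδ₀, min_le_right _ _,
    fun Φ hΦ Ψ hΨ => hosc Φ (reSlice_mono (min_le_left _ _) hΦ) Ψ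
      (reSlice_mono (min_le_left _ _) hΨ)⟩
  rw [add_sub_cancel_left, norm_smul, Complex.norm_real, Real.norm_of_nonneg hε.le]
  calc ε * ‖w‖ ≤ r / (‖w‖ + 1) * (‖w‖ + 1) := by gcongr; linarith
    _ = r := by field_simp

theorem exists_seq_reSlice (hC : IsCompact C) (hne : C.Nonempty) (w : ℕ → V) {η : ℕ → ℝ}
    (hη : ∀ n, 0 < η n) {c : ℝ} (hc : 0 < c) (g₀ : V) {δ₀ : ℝ} (hδ₀ : 0 < δ₀) :
    ∃ (g : ℕ → V) (δ : ℕ → ℝ), g 0 = g₀ ∧ δ 0 = δ₀ ∧ ∀ n, 0 < δ n ∧ δ (n + 1) ≤ δ n / 2 ∧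
      c * ‖g (n + 1) - g n‖ ≤ δ n ∧ ∀ Φ ∈ reSlice C (g (n + 1)) (δ (n + 1)),
        ∀ Ψ ∈ reSlice C (g (n + 1)) (δ (n + 1)), |(Φ (w n)).re - (Ψ (w n)).re| ≤ η n := by
  have step : ∀ n (p : V × ℝ), ∃ q : V × ℝ, 0 < p.2 → c * ‖q.1 - p.1‖ ≤ p.2 ∧ 0 < q.2 ∧
      q.2 ≤ p.2 / 2 ∧ ∀ Φ ∈ reSlice C q.1 q.2, ∀ Ψ ∈ reSlice C q.1 q.2,
        |(Φ (w n)).re - (Ψ (w n)).re| ≤ η n := fun n p => by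
    by_cases hp : 0 < p.2
    · obtain ⟨g', δ', hdist, h⟩ :=
        exists_reSlice_step hC hne p.1 (w n) (div_pos hp hc) (half_pos hp) (hη n)
      exact ⟨(g', δ'), fun _ => ⟨(le_div_iff₀' hc).1 hdist, h⟩⟩
    · exact ⟨p, fun h => (hp h).elim⟩
  choose next hnext using step
  let p : ℕ → V × ℝ := fun n => Nat.rec (g₀, δ₀) next n
  have hpos : ∀ n, 0 < (p n).2 := fun n => by
    induction n with
    | zero => exact hδ₀
    | succ n ih => exact (hnext n (p n) ih).2.1
  refine ⟨fun n => (p n).1, fun n => (p n).2, rfl, rfl, fun n => ?_⟩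
  obtain ⟨hdist, -, hhalf, hosc⟩ := hnext n (p n) (hpos n)
  exact ⟨hpos n, hhalf, hdist, hosc⟩

theorem exists_forall_maximizer_mem_reSlice [CompleteSpace V] (hC : IsCompact C)
    (hR : ∀ Φ ∈ C, ∀ v, ‖Φ v‖ ≤ R * ‖v‖) (hR0 : 0 < R) {g : ℕ → V} {δ : ℕ → ℝ}
    (hδ : ∀ n, 0 < δ n) (hhalf : ∀ n, δ (n + 1) ≤ δ n / 2)
    (hg : ∀ n, 8 * R * ‖g (n + 1) - g n‖ ≤ δ n) :
    ∃ f : V, ∀ Ψ ∈ C, (Ψ f).re = reSupport C f → ∀ n, Ψ ∈ reSlice C (g n) (δ n) := by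
  obtain ⟨f, hlim⟩ := exists_dist_le_of_dist_succ_le (x := g) (d := fun n => δ n / (8 * R))
    (fun n => by rw [div_right_comm]; gcongr; exact hhalf n)
    (fun n => by rw [dist_comm, dist_eq_norm, le_div_iff₀' (by positivity)]; exact hg n)
  refine ⟨f, fun Ψ hΨ hΨmax n => reSlice_subset_reSlice hC hR (g' := f) (δ' := δ n / 2) ?_
    ⟨hΨ, by linarith [hδ n]⟩⟩
  rw [← dist_eq_norm]
  calc 2 * R * dist (g n) f + δ n / 2 ≤ 2 * R * (2 * (δ n / (8 * R))) + δ n / 2 := by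
        gcongr; exact hlim n
    _ = δ n := by field_simp; ring

theorem exists_exposed_mem_reSlice [CompleteSpace V] [TopologicalSpace.SeparableSpace V]
    (hC : IsCompact C) (hne : C.Nonempty) (g₀ : V) {δ₀ : ℝ} (hδ₀ : 0 < δ₀) :
    ∃ Φ ∈ reSlice C g₀ δ₀, ∃ g : V, ∀ Ψ ∈ C, Ψ ≠ Φ → (Ψ g).re < (Φ g).re := by
  obtain ⟨R, hR0, hR⟩ := exists_norm_apply_le_of_isCompact hC
  have : Nonempty V := ⟨0⟩
  set u := TopologicalSpace.denseSeq V
  -- Stage `Nat.pair m j` flattens the direction `u m` up to `1 / (j + 1)`.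
  obtain ⟨g, δ, hg0, hδ0, hseq⟩ := exists_seq_reSlice hC hne (fun n => u n.unpair.1)
    (η := fun n => 1 / (n.unpair.2 + 1)) (fun n => by positivity) (c := 8 * R)
    (by positivity) g₀ hδ₀
  obtain ⟨f, hmax⟩ := exists_forall_maximizer_mem_reSlice hC hR hR0 (fun n => (hseq n).1)
    (fun n => (hseq n).2.1) (fun n => (hseq n).2.2.1)
  obtain ⟨Φ, hΦ, hΦmax⟩ := exists_re_apply_eq_reSupport hC hne f
  refine ⟨Φ, hg0 ▸ hδ0 ▸ hmax Φ hΦ hΦmax 0, f, fun Ψ hΨ hΨΦ => ?_⟩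
  refine (re_apply_le_reSupport hC hΨ f).trans_eq hΦmax.symm |>.lt_of_ne fun hΨmax => hΨΦ ?_
  refine eq_of_re_apply_eq_of_denseRange (TopologicalSpace.denseRange_denseSeq V) fun m => ?_
  refine eq_of_forall_dist_le fun ε hε => ?_
  obtain ⟨j, hj⟩ := exists_nat_one_div_lt hε
  have h := (hseq (Nat.pair m j)).2.2.2 Ψ (hmax Ψ hΨ (hΨmax.trans hΦmax) _) Φ
    (hmax Φ hΦ hΦmax _)
  simp only [Nat.unpair_pair] at h
  rw [Real.dist_eq]
  linarith

end Normed

end WeakDual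

/-- Klee's theorem: in the dual of a separable Banach space, every extreme point of a
weak-* compact convex set `C` lies in the weak-* closure of the weak-* exposed points
of `C`. -/
theorem stmt17 {V : Type*} [NormedAddCommGroup V] [NormedSpace ℂ V] [CompleteSpace V]
    [TopologicalSpace.SeparableSpace V]
    (C : Set (WeakDual ℂ V)) (hC : IsCompact C) (hconv : Convex ℝ C) :
    Set.extremePoints ℝ C ⊆
      closure {Φ ∈ C | ∃ f : V, ∀ Ψ ∈ C, Ψ ≠ Φ → (Ψ f).re < (Φ f).re} := by
  intro x hx
  rw [mem_closure_iff_nhds]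
  intro U hU
  obtain ⟨v, δ, hδ, hsub⟩ := WeakDual.exists_reSlice_subset_of_mem_extremePoints hC hconv hx hU
  obtain ⟨Φ, hΦ, g, hg⟩ := WeakDual.exists_exposed_mem_reSlice hC ⟨x, hx.1⟩ v hδ
  exact ⟨Φ, hsub hΦ, hΦ.1, g, hg⟩
end
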